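/- arXiv:1704.06433 — 10 statements merged into one kernel-verified Lean document; each statement's English description precedes it below -/
import Mathlib

section
/- Let h : ℝ → ℝ be continuous, let H : ℝ → ℝ be an antiderivative of h, let s : ℝ → ℝ be an antiderivative of x ↦ exp(H(x)/2), and let G : ℝ → ℝ be twice differentiable with G''(t) = 6·G(t)² for all t. Define F : ℝ → ℝ by F(x) = exp(H(x))·G(s(x)). Then F is twice differentiable and satisfies, for all x, the ODE −3·F(x)·h(x)² + 5·h(x)·F'(x) + 2·F(x)·h'(x) + 12·F(x)² − 2·F''(x) = 0. -/
/-!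
With `u = G ∘ s` and `s' = exp (H / 2)`, the chain rule and `G'' = 6 G²` give
`u'' = (h / 2) u' + 6 exp H u²`. Writing `F = exp H · u`, so that `F' = h F + exp H · u'`,
this second-order equation for `u` is exactly the stated one for `F`.
-/

section Reparametrization

variable {H s G G' : ℝ → ℝ}

theorem hasDerivAt_comp_of_hasDerivAt_exp_half
    (hs : ∀ x, HasDerivAt s (Real.exp (H x / 2)) x) (hG : ∀ t, HasDerivAt G (G' t) t)
    (x : ℝ) :
    HasDerivAt (fun x => G (s x)) (Real.exp (H x / 2) * G' (s x)) x := by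
  rw [mul_comm]
  exact (hG (s x)).comp x (hs x)

theorem hasDerivAt_exp_half_mul_comp_of_weierstrass {h : ℝ → ℝ}
    (hH : ∀ x, HasDerivAt H (h x) x) (hs : ∀ x, HasDerivAt s (Real.exp (H x / 2)) x)
    (hG' : ∀ t, HasDerivAt G' (6 * G t ^ 2) t) (x : ℝ) :
    HasDerivAt (fun x => Real.exp (H x / 2) * G' (s x))
      (h x / 2 * (Real.exp (H x / 2) * G' (s x)) + 6 * Real.exp (H x) * G (s x) ^ 2) x := by
  have hexp : HasDerivAt (fun x => Real.exp (H x / 2)) (Real.exp (H x / 2) * (h x / 2)) x :=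
    ((hH x).div_const 2).exp
  have hsq : Real.exp (H x / 2) ^ 2 = Real.exp (H x) := by
    rw [sq, ← Real.exp_add, add_halves]
  refine (hexp.mul (hasDerivAt_comp_of_hasDerivAt_exp_half hs hG' x)).congr_deriv ?_
  rw [← hsq]
  ring

end Reparametrization

section Gauge

variable {h h' H u v : ℝ → ℝ}

theorem hasDerivAt_exp_mul (hH : ∀ x, HasDerivAt H (h x) x) (hu : ∀ x, HasDerivAt u (v x) x)
    (x : ℝ) :
    HasDerivAt (fun x => Real.exp (H x) * u x)
      (h x * (Real.exp (H x) * u x) + Real.exp (H x) * v x) x :=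
  ((hH x).exp.mul (hu x)).congr_deriv (by ring)

theorem hasDerivAt_deriv_exp_mul (hH : ∀ x, HasDerivAt H (h x) x)
    (hh : ∀ x, HasDerivAt h (h' x) x) (hu : ∀ x, HasDerivAt u (v x) x)
    (hv : ∀ x, HasDerivAt v (h x / 2 * v x + 6 * Real.exp (H x) * u x ^ 2) x) (x : ℝ) :
    let F := fun x => Real.exp (H x) * u x
    let F' := fun x => h x * F x + Real.exp (H x) * v x
    HasDerivAt F'
      ((-3 * F x * h x ^ 2 + 5 * h x * F' x + 2 * F x * h' x + 12 * F x ^ 2) / 2) x := by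
  intro F F'
  have hF : ∀ x, HasDerivAt F (F' x) x := hasDerivAt_exp_mul hH hu
  refine (((hh x).mul (hF x)).add ((hH x).exp.mul (hv x))).congr_deriv ?_
  simp only [F, F']
  ring

end Gauge

theorem nearHorizon_EW_degenerate_ODE_general
    (h H s G : ℝ → ℝ)
    (hh_diff : Differentiable ℝ h)
    (hH : ∀ x, HasDerivAt H (h x) x)
    (hs : ∀ x, HasDerivAt s (Real.exp (H x / 2)) x)
    (hG : Differentiable ℝ G)
    (hG' : Differentiable ℝ (deriv G))
    (hGode : ∀ t, deriv (deriv G) t = 6 * (G t) ^ 2)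
    (F : ℝ → ℝ)
    (hF : ∀ x, F x = Real.exp (H x) * G (s x)) :
    (Differentiable ℝ F ∧ Differentiable ℝ (deriv F)) ∧
      ∀ x,
        -3 * F x * (h x) ^ 2 + 5 * h x * deriv F x + 2 * F x * deriv h x
            + 12 * (F x) ^ 2 - 2 * deriv (deriv F) x = 0 := by
  obtain rfl : F = fun x => Real.exp (H x) * G (s x) := funext hF
  have hu := hasDerivAt_comp_of_hasDerivAt_exp_half hs fun t => (hG t).hasDerivAt
  have hv := hasDerivAt_exp_half_mul_comp_of_weierstrass hH hs fun t => by
    simpa only [hGode] using (hG' t).hasDerivAt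
  have hF1 := hasDerivAt_exp_mul hH hu
  have hF2 := hasDerivAt_deriv_exp_mul hH (fun x => (hh_diff x).hasDerivAt) hu hv
  have hderiv := funext fun x => (hF1 x).deriv
  refine ⟨⟨fun x => (hF1 x).differentiableAt, ?_⟩, fun x => ?_⟩
  · rw [hderiv]
    exact fun x => (hF2 x).differentiableAt
  · rw [hderiv, (hF2 x).deriv]
    ring

/-- If `H` is an antiderivative of a continuous (and differentiable) `h`,
`s` is an antiderivative of `x ↦ exp(H x / 2)`, and `G` is twice differentiable with
`G'' = 6 G²`, then `F x = exp (H x) * G (s x)` is twice differentiable and satisfies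
`−3 F h² + 5 h F' + 2 F h' + 12 F² − 2 F'' = 0`. -/
theorem nearHorizon_EW_degenerate_ODE
    (h H s G : ℝ → ℝ)
    (hh_cont : Continuous h)
    (hh_diff : Differentiable ℝ h)
    (hH : ∀ x, HasDerivAt H (h x) x)
    (hs : ∀ x, HasDerivAt s (Real.exp (H x / 2)) x)
    (hG : Differentiable ℝ G)
    (hG' : Differentiable ℝ (deriv G))
    (hGode : ∀ t, deriv (deriv G) t = 6 * (G t) ^ 2)
    (F : ℝ → ℝ)
    (hF : ∀ x, F x = Real.exp (H x) * G (s x)) :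
    (Differentiable ℝ F ∧ Differentiable ℝ (deriv F)) ∧
      ∀ x,
        -3 * F x * (h x) ^ 2 + 5 * h x * deriv F x + 2 * F x * deriv h x
            + 12 * (F x) ^ 2 - 2 * deriv (deriv F) x = 0 :=
  nearHorizon_EW_degenerate_ODE_general h H s G hh_diff hH hs hG hG' hGode F hF
end

section
/- Let F : ℝ → ℝ be twice differentiable with F''(x) = 6·F(x)² for all x, and define u : ℝ³ → ℝ by u(x, ν, r) = −(r²/2)·F(x). Then u satisfies the dispersionless Kadomtsev–Petviashvili (dKP) equation: for all (x, ν, r), 2·∂r(∂ν u − u·∂r u)(x, ν, r) = ∂x∂x u(x, ν, r). -/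
/-! Both sides of dKP are `-3 r² F(x)²`: the flux `u_ν - u u_r` of `u = -(r²/2) F(x)` is
`-(F(x)²/2) r³`, whose `r`-derivative doubled is `-3 r² F(x)²`, while `u_xx = -(r²/2) F''(x)`
equals the same by `F'' = 6 F²`. -/

lemma deriv_neg_sq_half_mul (a r : ℝ) : deriv (fun s : ℝ => -(s ^ 2 / 2) * a) r = -(r * a) := by
  rw [deriv_mul_const_field, deriv.fun_neg, deriv_div_const, deriv_pow_field]
  ring

lemma deriv_deriv_const_mul (c : ℝ) (f : ℝ → ℝ) (x : ℝ) :
    deriv (deriv fun y => c * f y) x = c * deriv (deriv f) x := by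
  rw [deriv_const_mul_field', deriv_const_mul_field']

lemma deriv_dKP_flux_neg_sq_half_mul (a ν r : ℝ) :
    deriv (fun r' : ℝ => deriv (fun _ : ℝ => -(r' ^ 2 / 2) * a) ν
        - -(r' ^ 2 / 2) * a * deriv (fun s : ℝ => -(s ^ 2 / 2) * a) r') r
      = -(3 / 2) * r ^ 2 * a ^ 2 := by
  have hflux : (fun r' : ℝ => deriv (fun _ : ℝ => -(r' ^ 2 / 2) * a) ν
        - -(r' ^ 2 / 2) * a * deriv (fun s : ℝ => -(s ^ 2 / 2) * a) r')
      = fun r' => -(a ^ 2 / 2) * r' ^ 3 := by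
    funext r'
    rw [deriv_const, deriv_neg_sq_half_mul]
    ring
  rw [hflux, deriv_const_mul_field, deriv_pow_field]
  ring

theorem nearHorizon_dKP_general
    (F : ℝ → ℝ)
    (hFode : ∀ x, deriv (deriv F) x = 6 * (F x) ^ 2)
    (u : ℝ → ℝ → ℝ → ℝ)
    (hu : ∀ x ν r, u x ν r = -(r ^ 2 / 2) * F x) :
    ∀ x ν r,
      2 * deriv (fun r' : ℝ =>
          deriv (fun ν' : ℝ => u x ν' r') ν
            - u x ν r' * deriv (fun r'' : ℝ => u x ν r'') r') r
        = deriv (deriv (fun x' : ℝ => u x' ν r)) x := by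
  obtain rfl : u = fun x _ r => -(r ^ 2 / 2) * F x := funext₃ hu
  intro x ν r
  rw [deriv_dKP_flux_neg_sq_half_mul, deriv_deriv_const_mul, hFode]
  ring

/-- If `F'' = 6 F²`, then `u (x, ν, r) = −(r²/2) F x` satisfies the
dispersionless KP equation `2 (u_ν − u u_r)_r = u_{xx}`. -/
theorem nearHorizon_dKP
    (F : ℝ → ℝ)
    (hF : Differentiable ℝ F)
    (hF' : Differentiable ℝ (deriv F))
    (hFode : ∀ x, deriv (deriv F) x = 6 * (F x) ^ 2)
    (u : ℝ → ℝ → ℝ → ℝ)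
    (hu : ∀ x ν r, u x ν r = -(r ^ 2 / 2) * F x) :
    ∀ x ν r,
      2 * deriv (fun r' : ℝ =>
          deriv (fun ν' : ℝ => u x ν' r') ν
            - u x ν r' * deriv (fun r'' : ℝ => u x ν r'') r') r
        = deriv (deriv (fun x' : ℝ => u x' ν r)) x :=
  nearHorizon_dKP_general F hFode u hu
end

section
/- Fix real constants α, β, c, and let h : ℝ → ℝ be four times differentiable satisfying h''(x) = α·h(x)·h'(x) + β·h(x)³ for all x. Then for all x, the fourth-order expression E_c(h)(x) := h³(h')²(c−1)² − ½(c−1)²h⁴h'' + (9/4)(c−1)h²h'h'' − (3/4)(c−1)h³h''' − ½(h')²h'' + ½hh'h''' + h(h'')² − ¼h²h'''' (all evaluated at x) equals −(h(x)³/4)·(2(c−1)² + 3α(c−1) + α² − β)·(β·h(x)⁴ + α·h(x)²·h'(x) − 2·h'(x)²). -/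
/-!
Differentiating `h'' = α h h' + β h³` once and twice expresses `h'''` and `h''''` as
polynomials in `h, h', h''`; eliminating `h''` with the equation itself turns `E_c(h)` into a
polynomial in `h` and `h'`, which factors as stated.
-/

namespace CubicLienardODE

variable {𝕜 : Type*} [NontriviallyNormedField 𝕜] {α β : 𝕜} {h : 𝕜 → 𝕜}

theorem differentiable_deriv_deriv (hd1 : Differentiable 𝕜 h)
    (hd2 : Differentiable 𝕜 (deriv h))
    (hode : ∀ x, deriv (deriv h) x = α * h x * deriv h x + β * h x ^ 3) :
    Differentiable 𝕜 (deriv (deriv h)) := by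
  rw [funext hode]
  fun_prop

theorem deriv_deriv_deriv_eq (hd1 : Differentiable 𝕜 h) (hd2 : Differentiable 𝕜 (deriv h))
    (hode : ∀ x, deriv (deriv h) x = α * h x * deriv h x + β * h x ^ 3) (x : 𝕜) :
    deriv (deriv (deriv h)) x
      = α * deriv h x ^ 2 + α * h x * deriv (deriv h) x + 3 * β * h x ^ 2 * deriv h x := by
  have h1 := (hd1 x).hasDerivAt
  have h2 := (hd2 x).hasDerivAt
  conv_lhs => rw [funext hode]
  refine HasDerivAt.deriv ?_
  convert ((h1.const_mul α).fun_mul h2).fun_add ((h1.fun_pow 3).const_mul β) using 1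
  push_cast
  ring

theorem deriv_deriv_deriv_deriv_eq (hd1 : Differentiable 𝕜 h) (hd2 : Differentiable 𝕜 (deriv h))
    (hode : ∀ x, deriv (deriv h) x = α * h x * deriv h x + β * h x ^ 3) (x : 𝕜) :
    deriv (deriv (deriv (deriv h))) x
      = 3 * α * deriv h x * deriv (deriv h) x + α * h x * deriv (deriv (deriv h)) x
        + 6 * β * h x * deriv h x ^ 2 + 3 * β * h x ^ 2 * deriv (deriv h) x := by
  have h1 := (hd1 x).hasDerivAt
  have h2 := (hd2 x).hasDerivAt
  have h3 := (differentiable_deriv_deriv hd1 hd2 hode x).hasDerivAt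
  conv_lhs => rw [funext (deriv_deriv_deriv_eq hd1 hd2 hode)]
  refine HasDerivAt.deriv ?_
  convert ((h2.fun_pow 2).const_mul α).fun_add ((h1.const_mul α).fun_mul h3) |>.fun_add
    (((h1.fun_pow 2).const_mul (3 * β)).fun_mul h2) using 1
  push_cast
  ring

end CubicLienardODE

open CubicLienardODE in
theorem fourthOrder_expression_reduction_general
    (α β c : ℝ) (h : ℝ → ℝ)
    (hd1 : Differentiable ℝ h)
    (hd2 : Differentiable ℝ (deriv h))
    (hode : ∀ x, deriv (deriv h) x = α * h x * deriv h x + β * (h x) ^ 3) :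
    ∀ x,
      (h x) ^ 3 * (deriv h x) ^ 2 * (c - 1) ^ 2
        - (1 / 2) * (c - 1) ^ 2 * (h x) ^ 4 * deriv (deriv h) x
        + (9 / 4) * (c - 1) * (h x) ^ 2 * deriv h x * deriv (deriv h) x
        - (3 / 4) * (c - 1) * (h x) ^ 3 * deriv (deriv (deriv h)) x
        - (1 / 2) * (deriv h x) ^ 2 * deriv (deriv h) x
        + (1 / 2) * h x * deriv h x * deriv (deriv (deriv h)) x
        + h x * (deriv (deriv h) x) ^ 2
        - (1 / 4) * (h x) ^ 2 * deriv (deriv (deriv (deriv h))) x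
      = -((h x) ^ 3 / 4) * (2 * (c - 1) ^ 2 + 3 * α * (c - 1) + α ^ 2 - β)
          * (β * (h x) ^ 4 + α * (h x) ^ 2 * deriv h x - 2 * (deriv h x) ^ 2) := by
  intro x
  rw [deriv_deriv_deriv_deriv_eq hd1 hd2 hode, deriv_deriv_deriv_eq hd1 hd2 hode, hode]
  ring

/-- For a solution `h` of `h'' = α h h' + β h³`, the fourth-order
expression `E_c(h)` collapses to
`−(h³/4)(2(c−1)² + 3α(c−1) + α² − β)(β h⁴ + α h² h' − 2 (h')²)`. -/
theorem fourthOrder_expression_reduction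
    (α β c : ℝ) (h : ℝ → ℝ)
    (hd1 : Differentiable ℝ h)
    (hd2 : Differentiable ℝ (deriv h))
    (hd3 : Differentiable ℝ (deriv (deriv h)))
    (hd4 : Differentiable ℝ (deriv (deriv (deriv h))))
    (hode : ∀ x, deriv (deriv h) x = α * h x * deriv h x + β * (h x) ^ 3) :
    ∀ x,
      (h x) ^ 3 * (deriv h x) ^ 2 * (c - 1) ^ 2
        - (1 / 2) * (c - 1) ^ 2 * (h x) ^ 4 * deriv (deriv h) x
        + (9 / 4) * (c - 1) * (h x) ^ 2 * deriv h x * deriv (deriv h) x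
        - (3 / 4) * (c - 1) * (h x) ^ 3 * deriv (deriv (deriv h)) x
        - (1 / 2) * (deriv h x) ^ 2 * deriv (deriv h) x
        + (1 / 2) * h x * deriv h x * deriv (deriv (deriv h)) x
        + h x * (deriv (deriv h) x) ^ 2
        - (1 / 4) * (h x) ^ 2 * deriv (deriv (deriv (deriv h))) x
      = -((h x) ^ 3 / 4) * (2 * (c - 1) ^ 2 + 3 * α * (c - 1) + α ^ 2 - β)
          * (β * (h x) ^ 4 + α * (h x) ^ 2 * deriv h x - 2 * (deriv h x) ^ 2) :=
  fourthOrder_expression_reduction_general α β c h hd1 hd2 hode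
end

section
/- Fix real constants α, c and set β = 2(c−1)² + 3α(c−1) + α². If h : ℝ → ℝ is four times differentiable and satisfies h''(x) = α·h(x)·h'(x) + β·h(x)³ for all x, then h satisfies the fourth-order ODE (★): for all x, h³(h')²(c−1)² − ½(c−1)²h⁴h'' + (9/4)(c−1)h²h'h'' − (3/4)(c−1)h³h''' − ½(h')²h'' + ½hh'h''' + h(h'')² − ¼h²h'''' = 0. -/
/-!
Differentiating `h'' = α h h' + β h³` twice expresses `h'''` and `h''''` through lower
derivatives; substituting these and the equation itself turns the left-hand side of (★) into a
polynomial in `h` and `h'`, which vanishes identically once `β = 2(c−1)² + 3α(c−1) + α²`.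
-/

section SecondOrderODE

variable {α β : ℝ} {h : ℝ → ℝ}

theorem hasDerivAt_deriv_deriv_of_ode (hd1 : Differentiable ℝ h)
    (hd2 : Differentiable ℝ (deriv h))
    (hode : ∀ x, deriv (deriv h) x = α * h x * deriv h x + β * h x ^ 3) (x : ℝ) :
    HasDerivAt (deriv (deriv h))
      (α * deriv h x ^ 2 + α * h x * deriv (deriv h) x + 3 * β * h x ^ 2 * deriv h x) x := by
  have hh := (hd1 x).hasDerivAt
  have hh' := (hd2 x).hasDerivAt
  refine (((hh.const_mul α).mul hh').add ((hh.fun_pow 3).const_mul β)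
    |>.congr_of_eventuallyEq (Filter.Eventually.of_forall hode)).congr_deriv ?_
  ring

theorem deriv_deriv_deriv_of_ode (hd1 : Differentiable ℝ h)
    (hd2 : Differentiable ℝ (deriv h))
    (hode : ∀ x, deriv (deriv h) x = α * h x * deriv h x + β * h x ^ 3) (x : ℝ) :
    deriv (deriv (deriv h)) x =
      α * deriv h x ^ 2 + α * h x * deriv (deriv h) x + 3 * β * h x ^ 2 * deriv h x :=
  (hasDerivAt_deriv_deriv_of_ode hd1 hd2 hode x).deriv

theorem deriv_deriv_deriv_deriv_of_ode (hd1 : Differentiable ℝ h)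
    (hd2 : Differentiable ℝ (deriv h))
    (hode : ∀ x, deriv (deriv h) x = α * h x * deriv h x + β * h x ^ 3) (x : ℝ) :
    deriv (deriv (deriv (deriv h))) x =
      3 * α * deriv h x * deriv (deriv h) x + α * h x * deriv (deriv (deriv h)) x
        + 6 * β * h x * deriv h x ^ 2 + 3 * β * h x ^ 2 * deriv (deriv h) x := by
  have hh := (hd1 x).hasDerivAt
  have hh' := (hd2 x).hasDerivAt
  have hh'' := (hasDerivAt_deriv_deriv_of_ode hd1 hd2 hode x).differentiableAt.hasDerivAt
  refine ((((hh'.fun_pow 2).const_mul α).add ((hh.const_mul α).mul hh'')).add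
    (((hh.fun_pow 2).const_mul (3 * β)).mul hh')
    |>.congr_of_eventuallyEq
      (Filter.Eventually.of_forall (deriv_deriv_deriv_of_ode hd1 hd2 hode))).deriv.trans ?_
  ring

end SecondOrderODE

theorem secondOrder_solves_fourthOrder_general
    (α c β : ℝ) (hβ : β = 2 * (c - 1) ^ 2 + 3 * α * (c - 1) + α ^ 2)
    (h : ℝ → ℝ)
    (hd1 : Differentiable ℝ h)
    (hd2 : Differentiable ℝ (deriv h))
    (hode : ∀ x, deriv (deriv h) x = α * h x * deriv h x + β * (h x) ^ 3) :
    ∀ x,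
      (h x) ^ 3 * (deriv h x) ^ 2 * (c - 1) ^ 2
        - (1 / 2) * (c - 1) ^ 2 * (h x) ^ 4 * deriv (deriv h) x
        + (9 / 4) * (c - 1) * (h x) ^ 2 * deriv h x * deriv (deriv h) x
        - (3 / 4) * (c - 1) * (h x) ^ 3 * deriv (deriv (deriv h)) x
        - (1 / 2) * (deriv h x) ^ 2 * deriv (deriv h) x
        + (1 / 2) * h x * deriv h x * deriv (deriv (deriv h)) x
        + h x * (deriv (deriv h) x) ^ 2
        - (1 / 4) * (h x) ^ 2 * deriv (deriv (deriv (deriv h))) x = 0 := by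
  intro x
  rw [deriv_deriv_deriv_deriv_of_ode hd1 hd2 hode, deriv_deriv_deriv_of_ode hd1 hd2 hode, hode x]
  subst hβ
  ring

/-- With `β = 2(c−1)² + 3α(c−1) + α²`, every solution of
`h'' = α h h' + β h³` satisfies the fourth-order ODE (★). -/
theorem secondOrder_solves_fourthOrder
    (α c β : ℝ) (hβ : β = 2 * (c - 1) ^ 2 + 3 * α * (c - 1) + α ^ 2)
    (h : ℝ → ℝ)
    (hd1 : Differentiable ℝ h)
    (hd2 : Differentiable ℝ (deriv h))
    (hd3 : Differentiable ℝ (deriv (deriv h)))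
    (hd4 : Differentiable ℝ (deriv (deriv (deriv h))))
    (hode : ∀ x, deriv (deriv h) x = α * h x * deriv h x + β * (h x) ^ 3) :
    ∀ x,
      (h x) ^ 3 * (deriv h x) ^ 2 * (c - 1) ^ 2
        - (1 / 2) * (c - 1) ^ 2 * (h x) ^ 4 * deriv (deriv h) x
        + (9 / 4) * (c - 1) * (h x) ^ 2 * deriv h x * deriv (deriv h) x
        - (3 / 4) * (c - 1) * (h x) ^ 3 * deriv (deriv (deriv h)) x
        - (1 / 2) * (deriv h x) ^ 2 * deriv (deriv h) x
        + (1 / 2) * h x * deriv h x * deriv (deriv (deriv h)) x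
        + h x * (deriv (deriv h) x) ^ 2
        - (1 / 4) * (h x) ^ 2 * deriv (deriv (deriv (deriv h))) x = 0 :=
  secondOrder_solves_fourthOrder_general α c β hβ h hd1 hd2 hode
end

section
/- Fix real constants α, β. Let J ⊆ ℝ be an open interval with 0 ∉ J, and let x : J → ℝ be twice differentiable satisfying x''(s) = −β·s³·x'(s)³ − α·s·x'(s)² for all s ∈ J. Define y : J → ℝ by y(s) = s²·x'(s). Then y satisfies the Abel differential equation of the first kind: for all s ∈ J, y'(s) = (1/s)·(−β·y(s)³ − α·y(s)² + 2·y(s)). -/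
/-! The product rule gives `y' = 2 s x' + s² x''`; substituting the ODE for `x''` and writing
`x' = y / s²` turns each term into a power of `y` divided by `s`. -/

theorem HasDerivAt.sq_mul {f : ℝ → ℝ} {f' s : ℝ} (hf : HasDerivAt f f' s) :
    HasDerivAt (fun t => t ^ 2 * f t) (2 * s * f s + s ^ 2 * f') s := by
  simpa using (hasDerivAt_pow 2 s).fun_mul hf

theorem abel_form_of_dualODE (α β : ℝ) {s : ℝ} (hs : s ≠ 0) (p : ℝ) :
    2 * s * p + s ^ 2 * (-β * s ^ 3 * p ^ 3 - α * s * p ^ 2)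
      = (1 / s) * (-β * (s ^ 2 * p) ^ 3 - α * (s ^ 2 * p) ^ 2 + 2 * (s ^ 2 * p)) := by
  field_simp
  ring

theorem dualODE_to_Abel_general
    (α β : ℝ) (J : Set ℝ)
    (hJ0 : (0 : ℝ) ∉ J)
    (x : ℝ → ℝ)
    (xd2 : ∀ s ∈ J, DifferentiableAt ℝ (deriv x) s)
    (xode : ∀ s ∈ J, deriv (deriv x) s = -β * s ^ 3 * (deriv x s) ^ 3 - α * s * (deriv x s) ^ 2)
    (y : ℝ → ℝ)
    (hy : ∀ s, y s = s ^ 2 * deriv x s) :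
    ∀ s ∈ J,
      deriv y s = (1 / s) * (-β * (y s) ^ 3 - α * (y s) ^ 2 + 2 * y s) := by
  intro s hs
  have hs0 : s ≠ 0 := fun h => hJ0 (h ▸ hs)
  have hdy : deriv y s = 2 * s * deriv x s + s ^ 2 * deriv (deriv x) s := by
    rw [show y = fun t => t ^ 2 * deriv x t from funext hy]
    exact (xd2 s hs).hasDerivAt.sq_mul.deriv
  rw [hdy, xode s hs, hy s]
  exact abel_form_of_dualODE α β hs0 (deriv x s)

/-- If `x'' = −β s³ (x')³ − α s (x')²` on an open interval `J` avoiding `0`,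
then `y s = s² x' s` satisfies the Abel equation `y' = (1/s)(−β y³ − α y² + 2 y)`. -/
theorem dualODE_to_Abel
    (α β : ℝ) (J : Set ℝ)
    (hJopen : IsOpen J) (hJconn : J.OrdConnected) (hJ0 : (0 : ℝ) ∉ J)
    (x : ℝ → ℝ)
    (xd1 : ∀ s ∈ J, DifferentiableAt ℝ x s)
    (xd2 : ∀ s ∈ J, DifferentiableAt ℝ (deriv x) s)
    (xode : ∀ s ∈ J, deriv (deriv x) s = -β * s ^ 3 * (deriv x s) ^ 3 - α * s * (deriv x s) ^ 2)
    (y : ℝ → ℝ)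
    (hy : ∀ s, y s = s ^ 2 * deriv x s) :
    ∀ s ∈ J,
      deriv y s = (1 / s) * (-β * (y s) ^ 3 - α * (y s) ^ 2 + 2 * y s) :=
  dualODE_to_Abel_general α β J hJ0 x xd2 xode y hy
end

section
/- Fix real constants α, β, γ with γ ≠ 0, and let J ⊆ ℝ be an open interval on which y > 0, β·y² + α·y − 2 > 0, α² + 8β > 0, and (2βy + α)² < α² + 8β. Define h : J → ℝ by h(y) = γ·√y·exp( (α/(2√(α²+8β)))·artanh((2βy + α)/√(α²+8β)) ) / (βy² + αy − 2)^{1/4}. Then h is differentiable on J and satisfies, for all y ∈ J, h'(y)·(2y − α·y² − β·y³) = h(y). -/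
/-!
With `Q = βy² + αy - 2` and `s = √(α² + 8β)`, the three factors `√y`, `exp (c · artanh w)` and
`Q^(-1/4)` of `h` have logarithmic derivatives `1/(2y)`, `-α/(4Q)` and `-(2βy + α)/(4Q)`; the
middle one because `s² - (2βy + α)² = -4βQ` turns `artanh'` of the affine argument `w` into
`-s/(2Q)`. The sum is `-1/(yQ)`, and `2y - αy² - βy³ = -yQ`.
-/

/-- The real inverse hyperbolic tangent. -/
noncomputable def artanh (x : ℝ) : ℝ := (1 / 2) * Real.log ((1 + x) / (1 - x))

theorem hasDerivAt_artanh {x : ℝ} (hx₁ : x ≠ 1) (hx₂ : x ≠ -1) :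
    HasDerivAt artanh (1 - x ^ 2)⁻¹ x := by
  have hsub : 1 - x ≠ 0 := sub_ne_zero.2 hx₁.symm
  have hadd : 1 + x ≠ 0 := fun h => hx₂ (by linarith)
  have hsq : 1 - x ^ 2 ≠ 0 := by
    rw [show 1 - x ^ 2 = (1 - x) * (1 + x) by ring]; exact mul_ne_zero hsub hadd
  have hquot : HasDerivAt (fun t => (1 + t) / (1 - t)) (2 / (1 - x) ^ 2) x :=
    (((hasDerivAt_id' x).const_add 1).div ((hasDerivAt_id' x).const_sub 1) hsub).congr_deriv
      (by ring)
  refine ((hquot.log (div_ne_zero hadd hsub)).const_mul (1 / 2)).congr_deriv ?_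
  field_simp
  ring

theorem HasDerivAt.mul_of_logDeriv {f g : ℝ → ℝ} {a b x : ℝ}
    (hf : HasDerivAt f (f x * a) x) (hg : HasDerivAt g (g x * b) x) :
    HasDerivAt (fun t => f t * g t) (f x * g x * (a + b)) x :=
  (hf.mul hg).congr_deriv (by ring)

theorem HasDerivAt.div_of_logDeriv {f g : ℝ → ℝ} {a b x : ℝ}
    (hf : HasDerivAt f (f x * a) x) (hg : HasDerivAt g (g x * b) x) (hgx : g x ≠ 0) :
    HasDerivAt (fun t => f t / g t) (f x / g x * (a - b)) x :=
  (hf.div hg hgx).congr_deriv (by field_simp)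

theorem hasDerivAt_sqrt_eq_mul {x : ℝ} (hx : 0 < x) :
    HasDerivAt Real.sqrt (Real.sqrt x * (2 * x)⁻¹) x := by
  refine (Real.hasDerivAt_sqrt hx.ne').congr_deriv ?_
  have hsq := Real.mul_self_sqrt hx.le
  have : Real.sqrt x ≠ 0 := (Real.sqrt_pos.2 hx).ne'
  field_simp
  linarith

theorem HasDerivAt.rpow_const_eq_mul {f : ℝ → ℝ} {f' x : ℝ} (p : ℝ) (hf : HasDerivAt f f' x)
    (hx : 0 < f x) : HasDerivAt (fun t => f t ^ p) (f x ^ p * (p * f' / f x)) x := by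
  refine (hf.rpow_const (p := p) (Or.inl hx.ne')).congr_deriv ?_
  rw [Real.rpow_sub hx, Real.rpow_one]
  field_simp

noncomputable def abelSolution (α β γ y : ℝ) : ℝ :=
  γ * Real.sqrt y *
    Real.exp ((α / (2 * Real.sqrt (α ^ 2 + 8 * β))) *
      artanh ((2 * β * y + α) / Real.sqrt (α ^ 2 + 8 * β))) /
    (β * y ^ 2 + α * y - 2) ^ ((1 : ℝ) / 4)

section AbelSolution

variable {α β y : ℝ}

theorem hasDerivAt_artanh_abel (hw : (2 * β * y + α) ^ 2 < α ^ 2 + 8 * β) :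
    HasDerivAt (fun t => artanh ((2 * β * t + α) / Real.sqrt (α ^ 2 + 8 * β)))
      (-Real.sqrt (α ^ 2 + 8 * β) / (2 * (β * y ^ 2 + α * y - 2))) y := by
  set s := Real.sqrt (α ^ 2 + 8 * β)
  have hs : 0 < s := Real.sqrt_pos.2 ((sq_nonneg _).trans_lt hw)
  have hs2 : s ^ 2 = α ^ 2 + 8 * β := Real.sq_sqrt ((sq_nonneg _).trans hw.le)
  have hw₁ : ((2 * β * y + α) / s) ^ 2 < 1 := by
    rwa [div_pow, hs2, div_lt_one ((sq_nonneg _).trans_lt hw)]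
  have hne₁ : (2 * β * y + α) / s ≠ 1 := fun h => by simp [h] at hw₁
  have hne₂ : (2 * β * y + α) / s ≠ -1 := fun h => by simp [h] at hw₁
  have hlin : HasDerivAt (fun t => (2 * β * t + α) / s) (2 * β / s) y :=
    (((hasDerivAt_id' y).const_mul (2 * β)).add_const α).div_const s |>.congr_deriv (by ring)
  refine ((hasDerivAt_artanh hne₁ hne₂).comp y hlin).congr_deriv ?_
  have hkey : s ^ 2 - (2 * β * y + α) ^ 2 = -4 * β * (β * y ^ 2 + α * y - 2) := by
    rw [hs2]; ring
  have hβQ : β * (β * y ^ 2 + α * y - 2) < 0 := by linarith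
  obtain ⟨hβ, hQ⟩ := mul_ne_zero_iff.1 hβQ.ne
  have hw₂ : 1 - ((2 * β * y + α) / s) ^ 2 = (s ^ 2 - (2 * β * y + α) ^ 2) / s ^ 2 := by
    field_simp
  rw [hw₂, hkey]
  field_simp
  ring

theorem hasDerivAt_exp_artanh_abel (hw : (2 * β * y + α) ^ 2 < α ^ 2 + 8 * β) :
    HasDerivAt (fun t => Real.exp ((α / (2 * Real.sqrt (α ^ 2 + 8 * β))) *
        artanh ((2 * β * t + α) / Real.sqrt (α ^ 2 + 8 * β))))
      (Real.exp ((α / (2 * Real.sqrt (α ^ 2 + 8 * β))) *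
        artanh ((2 * β * y + α) / Real.sqrt (α ^ 2 + 8 * β))) *
        (-α / (4 * (β * y ^ 2 + α * y - 2)))) y := by
  refine ((hasDerivAt_artanh_abel hw).const_mul _).exp.congr_deriv ?_
  have hs : Real.sqrt (α ^ 2 + 8 * β) ≠ 0 := (Real.sqrt_pos.2 ((sq_nonneg _).trans_lt hw)).ne'
  field_simp
  ring

theorem hasDerivAt_abelSolution (γ : ℝ) (hy : 0 < y) (hQ : 0 < β * y ^ 2 + α * y - 2)
    (hw : (2 * β * y + α) ^ 2 < α ^ 2 + 8 * β) :
    HasDerivAt (abelSolution α β γ)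
      (abelSolution α β γ y / (2 * y - α * y ^ 2 - β * y ^ 3)) y := by
  have hsqrt := ((hasDerivAt_sqrt_eq_mul hy).const_mul γ).congr_deriv (mul_assoc _ _ _).symm
  have hquad : HasDerivAt (fun t => β * t ^ 2 + α * t - 2) (2 * β * y + α) y :=
    (((hasDerivAt_pow 2 y).const_mul β).add ((hasDerivAt_id' y).const_mul α)).sub_const 2
      |>.congr_deriv (by ring)
  have hquot := (hsqrt.mul_of_logDeriv (hasDerivAt_exp_artanh_abel hw)).div_of_logDeriv
    (hquad.rpow_const_eq_mul (1 / 4) hQ) (Real.rpow_pos_of_pos hQ _).ne'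
  refine hquot.congr_deriv (congr_arg (abelSolution α β γ y * ·) ?_ |>.trans (mul_one_div _ _))
  rw [show 2 * y - α * y ^ 2 - β * y ^ 3 = -(y * (β * y ^ 2 + α * y - 2)) by ring]
  generalize hQdef : β * y ^ 2 + α * y - 2 = Q at hQ ⊢
  field_simp
  linear_combination -4 * hQdef

end AbelSolution

theorem Abel_explicit_solution_general
    (α β γ : ℝ)
    (J : Set ℝ)
    (hpos : ∀ y ∈ J, 0 < y)
    (hquad : ∀ y ∈ J, 0 < β * y ^ 2 + α * y - 2)
    (hrange : ∀ y ∈ J, (2 * β * y + α) ^ 2 < α ^ 2 + 8 * β)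
    (h : ℝ → ℝ)
    (hdef : ∀ y, h y =
      γ * Real.sqrt y *
        Real.exp ((α / (2 * Real.sqrt (α ^ 2 + 8 * β))) *
          artanh ((2 * β * y + α) / Real.sqrt (α ^ 2 + 8 * β))) /
        (β * y ^ 2 + α * y - 2) ^ ((1 : ℝ) / 4)) :
    ∀ y ∈ J,
      DifferentiableAt ℝ h y ∧
        deriv h y * (2 * y - α * y ^ 2 - β * y ^ 3) = h y := by
  intro y hy
  obtain rfl : h = abelSolution α β γ := funext hdef
  have hderiv := hasDerivAt_abelSolution γ (hpos y hy) (hquad y hy) (hrange y hy)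
  have hD : 2 * y - α * y ^ 2 - β * y ^ 3 ≠ 0 := by
    have := mul_pos (hpos y hy) (hquad y hy)
    linarith
  exact ⟨hderiv.differentiableAt, by rw [hderiv.deriv, div_mul_cancel₀ _ hD]⟩

/-- The explicit function
`h(y) = γ √y exp((α/(2√(α²+8β))) artanh((2βy+α)/√(α²+8β))) / (βy²+αy−2)^{1/4}`
solves the Abel equation in the form `h'(y)(2y − αy² − βy³) = h(y)`. -/
theorem Abel_explicit_solution
    (α β γ : ℝ) (hγ : γ ≠ 0)
    (J : Set ℝ) (hJopen : IsOpen J) (hJconn : J.OrdConnected)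
    (hpos : ∀ y ∈ J, 0 < y)
    (hquad : ∀ y ∈ J, 0 < β * y ^ 2 + α * y - 2)
    (hdisc : 0 < α ^ 2 + 8 * β)
    (hrange : ∀ y ∈ J, (2 * β * y + α) ^ 2 < α ^ 2 + 8 * β)
    (h : ℝ → ℝ)
    (hdef : ∀ y, h y =
      γ * Real.sqrt y *
        Real.exp ((α / (2 * Real.sqrt (α ^ 2 + 8 * β))) *
          artanh ((2 * β * y + α) / Real.sqrt (α ^ 2 + 8 * β))) /
        (β * y ^ 2 + α * y - 2) ^ ((1 : ℝ) / 4)) :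
    ∀ y ∈ J,
      DifferentiableAt ℝ h y ∧
        deriv h y * (2 * y - α * y ^ 2 - β * y ^ 3) = h y :=
  Abel_explicit_solution_general α β γ J hpos hquad hrange h hdef
end

section
/- Fix real constants α, β, γ with γ ≠ 0, and let J ⊆ ℝ be an open interval on which y > 0, β·y² + α·y − 2 > 0, α² + 8β > 0, and (2βy + α)² < α² + 8β. Define A(y) = (α/(2√(α²+8β)))·artanh((2βy + α)/√(α²+8β)), h(y) = γ·√y·exp(A(y))/(βy² + αy − 2)^{1/4}, and let x : J → ℝ be any differentiable function with x'(y) = −(1/γ)·exp(−A(y))/(√y·(βy² + αy − 2)^{3/4}) for all y ∈ J. Then for all y ∈ J, h(y)²·x'(y) = y·h'(y). -/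
theorem hasDerivAt_artanh_s7 {u : ℝ} (hu : u ^ 2 < 1) :
    HasDerivAt artanh (1 / (1 - u ^ 2)) u := by
  have h1p : 1 + u ≠ 0 := by nlinarith
  have h1m : 1 - u ≠ 0 := by nlinarith
  have h1sq : 1 - u ^ 2 ≠ 0 := by linarith
  have hquot : HasDerivAt (fun t => (1 + t) / (1 - t)) (2 / (1 - u) ^ 2) u :=
    (((hasDerivAt_id u).const_add 1).div ((hasDerivAt_id u).const_sub 1) h1m).congr_deriv
      (by simp only [id]; ring)
  refine ((hquot.log (div_ne_zero h1p h1m)).const_mul (1 / 2)).congr_deriv ?_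
  field_simp
  ring

namespace DualODE

noncomputable section

variable {α β γ y : ℝ}

def quad (α β y : ℝ) : ℝ := β * y ^ 2 + α * y - 2

def A (α β y : ℝ) : ℝ :=
  α / (2 * √(α ^ 2 + 8 * β)) * artanh ((2 * β * y + α) / √(α ^ 2 + 8 * β))

def h (α β γ y : ℝ) : ℝ := γ * √y * Real.exp (A α β y) / quad α β y ^ (1 / 4 : ℝ)

def xDeriv (α β γ y : ℝ) : ℝ :=
  -(1 / γ) * Real.exp (-A α β y) / (√y * quad α β y ^ (3 / 4 : ℝ))

theorem hasDerivAt_quad : HasDerivAt (quad α β) (2 * β * y + α) y :=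
  ((((hasDerivAt_pow 2 y).const_mul β).add ((hasDerivAt_id y).const_mul α)).sub_const 2
    ).congr_deriv (by ring)

theorem hasDerivAt_A (hdisc : 0 < α ^ 2 + 8 * β)
    (hrange : (2 * β * y + α) ^ 2 < α ^ 2 + 8 * β) :
    HasDerivAt (A α β) (-α / (4 * quad α β y)) y := by
  set s := √(α ^ 2 + 8 * β)
  have hs : 0 < s := Real.sqrt_pos.mpr hdisc
  have hs2 : s ^ 2 = α ^ 2 + 8 * β := Real.sq_sqrt hdisc.le
  have hdiscr : s ^ 2 - (2 * β * y + α) ^ 2 = -4 * β * quad α β y := by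
    rw [hs2, quad]; ring
  have hβ : β ≠ 0 := by rintro rfl; linarith
  have hQ : quad α β y ≠ 0 := by rintro hQ; rw [hQ] at hdiscr; nlinarith
  have hu : ((2 * β * y + α) / s) ^ 2 < 1 := by
    rwa [div_pow, div_lt_one (by positivity), hs2]
  have hinner : HasDerivAt (fun t => (2 * β * t + α) / s) (2 * β / s) y := by
    simpa using (((hasDerivAt_id y).const_mul (2 * β)).add_const α).div_const s
  refine (((hasDerivAt_artanh_s7 hu).comp y hinner).const_mul (α / (2 * s))).congr_deriv ?_
  rw [div_pow, one_sub_div (by positivity), hdiscr]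
  field_simp

theorem hasDerivAt_h (hdisc : 0 < α ^ 2 + 8 * β)
    (hrange : (2 * β * y + α) ^ 2 < α ^ 2 + 8 * β) (hy : 0 < y) (hQ : 0 < quad α β y) :
    HasDerivAt (h α β γ) (-h α β γ y / (y * quad α β y)) y := by
  have hnum := ((Real.hasDerivAt_sqrt hy.ne').const_mul γ).mul (hasDerivAt_A hdisc hrange).exp
  have hden := hasDerivAt_quad.rpow_const (p := 1 / 4) (Or.inl hQ.ne')
  refine (hnum.div hden (by positivity)).congr_deriv ?_
  have hsy : √y ^ 2 = y := Real.sq_sqrt hy.le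
  rw [Real.rpow_sub_one hQ.ne', h, Pi.mul_apply]
  field_simp
  rw [hsy, quad]
  ring

theorem h_mul_xDeriv (hγ : γ ≠ 0) (hy : 0 < y) (hQ : 0 < quad α β y) :
    h α β γ y * xDeriv α β γ y = -1 / quad α β y := by
  have hpow : quad α β y ^ (1 / 4 : ℝ) * quad α β y ^ (3 / 4 : ℝ) = quad α β y := by
    rw [← Real.rpow_add hQ]; norm_num
  have hsy : √y ≠ 0 := (Real.sqrt_pos.mpr hy).ne'
  rw [h, xDeriv, Real.exp_neg]
  field_simp
  rw [hpow]

end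

end DualODE

theorem parametric_solution_consistency_general
    (α β γ : ℝ) (hγ : γ ≠ 0)
    (J : Set ℝ)
    (hpos : ∀ y ∈ J, 0 < y)
    (hquad : ∀ y ∈ J, 0 < β * y ^ 2 + α * y - 2)
    (hdisc : 0 < α ^ 2 + 8 * β)
    (hrange : ∀ y ∈ J, (2 * β * y + α) ^ 2 < α ^ 2 + 8 * β)
    (A h : ℝ → ℝ)
    (hA : ∀ y, A y = (α / (2 * Real.sqrt (α ^ 2 + 8 * β))) *
        artanh ((2 * β * y + α) / Real.sqrt (α ^ 2 + 8 * β)))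
    (hdef : ∀ y, h y =
      γ * Real.sqrt y * Real.exp (A y) /
        (β * y ^ 2 + α * y - 2) ^ ((1 : ℝ) / 4))
    (x : ℝ → ℝ)
    (hx : ∀ y ∈ J, HasDerivAt x
      (-(1 / γ) * Real.exp (-(A y)) /
        (Real.sqrt y * (β * y ^ 2 + α * y - 2) ^ ((3 : ℝ) / 4))) y) :
    ∀ y ∈ J, (h y) ^ 2 * deriv x y = y * deriv h y := by
  obtain rfl : A = DualODE.A α β := funext hA
  obtain rfl : h = DualODE.h α β γ := funext hdef
  intro y hy
  have hy0 := hpos y hy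
  have hQ : 0 < DualODE.quad α β y := hquad y hy
  have hxd : HasDerivAt x (DualODE.xDeriv α β γ y) y := hx y hy
  rw [hxd.deriv, (DualODE.hasDerivAt_h hdisc (hrange y hy) hy0 hQ).deriv,
    sq, mul_assoc, DualODE.h_mul_xDeriv hγ hy0 hQ]
  field_simp

/-- With `A(y) = (α/(2√(α²+8β))) artanh((2βy+α)/√(α²+8β))`,
`h(y) = γ √y e^{A(y)} / (βy²+αy−2)^{1/4}` and `x` any antiderivative of
`−(1/γ) e^{−A(y)} / (√y (βy²+αy−2)^{3/4})`, one has `h² x' = y h'` on `J`. -/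
theorem parametric_solution_consistency
    (α β γ : ℝ) (hγ : γ ≠ 0)
    (J : Set ℝ) (hJopen : IsOpen J) (hJconn : J.OrdConnected)
    (hpos : ∀ y ∈ J, 0 < y)
    (hquad : ∀ y ∈ J, 0 < β * y ^ 2 + α * y - 2)
    (hdisc : 0 < α ^ 2 + 8 * β)
    (hrange : ∀ y ∈ J, (2 * β * y + α) ^ 2 < α ^ 2 + 8 * β)
    (A h : ℝ → ℝ)
    (hA : ∀ y, A y = (α / (2 * Real.sqrt (α ^ 2 + 8 * β))) *
        artanh ((2 * β * y + α) / Real.sqrt (α ^ 2 + 8 * β)))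
    (hdef : ∀ y, h y =
      γ * Real.sqrt y * Real.exp (A y) /
        (β * y ^ 2 + α * y - 2) ^ ((1 : ℝ) / 4))
    (x : ℝ → ℝ)
    (hx : ∀ y ∈ J, HasDerivAt x
      (-(1 / γ) * Real.exp (-(A y)) /
        (Real.sqrt y * (β * y ^ 2 + α * y - 2) ^ ((3 : ℝ) / 4))) y) :
    ∀ y ∈ J, (h y) ^ 2 * deriv x y = y * deriv h y :=
  parametric_solution_consistency_general α β γ hγ J hpos hquad hdisc hrange A h hA hdef x hx
end

section
/- Fix real constants α ≠ 0, ℓ, b with ℓ·α > 0, and set m = √(2ℓα)/2. Let I ⊆ ℝ be an open interval on which tan(m(x+b)) is defined (i.e. m(x+b) avoids π/2 + πℤ). Then the function h(x) = (√(2ℓα)/α)·tan((√(2ℓα)/2)·(x + b)) is twice differentiable on I and satisfies h''(x) = α·h(x)·h'(x) for all x ∈ I. -/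
set_option maxHeartbeats 1000000 in
/-- For `ℓ α > 0` and `m = √(2ℓα)/2`, the function
`h(x) = (√(2ℓα)/α) tan(m (x+b))` satisfies `h'' = α h h'` on any open interval
where the tangent is defined. -/
theorem tan_solution_beta_zero
    (α ℓ b : ℝ) (hα : α ≠ 0) (hℓα : 0 < ℓ * α)
    (m : ℝ) (hm : m = Real.sqrt (2 * ℓ * α) / 2)
    (I : Set ℝ) (hIopen : IsOpen I) (hIconn : I.OrdConnected)
    (hdefined : ∀ x ∈ I, Real.cos (m * (x + b)) ≠ 0)
    (h : ℝ → ℝ)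
    (hdef : ∀ x, h x = (Real.sqrt (2 * ℓ * α) / α) *
      Real.tan ((Real.sqrt (2 * ℓ * α) / 2) * (x + b))) :
    ∀ x ∈ I,
      (DifferentiableAt ℝ h x ∧ DifferentiableAt ℝ (deriv h) x) ∧
        deriv (deriv h) x = α * h x * deriv h x := by
  set s := Real.sqrt (2 * ℓ * α) with hsdef
  have h2 : (0:ℝ) < 2 * ℓ * α := by nlinarith
  have hs2 : s ^ 2 = 2 * ℓ * α := Real.sq_sqrt h2.le
  have hs0 : 0 < s := Real.sqrt_pos.mpr h2
  -- inner function and its derivative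
  have hu : ∀ x : ℝ, HasDerivAt (fun y => (s/2) * (y + b)) (s/2) x := by
    intro x
    simpa using ((hasDerivAt_id x).add_const b).const_mul (s/2)
  set U : Set ℝ := {x | Real.cos ((s/2) * (x + b)) ≠ 0} with hUdef
  have hUopen : IsOpen U := by
    have : Continuous fun x : ℝ => Real.cos ((s/2) * (x + b)) := by fun_prop
    exact isOpen_compl_singleton.preimage this
  set g : ℝ → ℝ := fun x => (s/α) * (1 / Real.cos ((s/2) * (x + b)) ^ 2 * (s/2))
    with hgdef
  have hderivh : ∀ x ∈ U, HasDerivAt h (g x) x := by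
    intro x hx
    have hc : Real.cos ((s/2) * (x + b)) ≠ 0 := hx
    have ht : HasDerivAt (fun y => Real.tan ((s/2) * (y + b)))
        (1 / Real.cos ((s/2) * (x + b)) ^ 2 * (s/2)) x :=
      by have := (Real.hasDerivAt_tan hc).comp x (hu x); exact this
    have := ht.const_mul (s/α)
    refine this.congr_of_eventuallyEq ?_
    filter_upwards with y
    rw [hdef y]
  have hderivh_eq : ∀ x ∈ U, deriv h x = g x := fun x hx => (hderivh x hx).deriv
  -- second derivative of g on U
  have hderivg : ∀ x ∈ U, HasDerivAt g
      ((s/α) * (-(2 * Real.cos ((s/2) * (x + b)) ^ 1 *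
        (-Real.sin ((s/2) * (x + b)) * (s/2))) /
        (Real.cos ((s/2) * (x + b)) ^ 2) ^ 2 * (s/2))) x := by
    intro x hx
    have hc : Real.cos ((s/2) * (x + b)) ≠ 0 := hx
    have hcos : HasDerivAt (fun y => Real.cos ((s/2) * (y + b)))
        (-Real.sin ((s/2) * (x + b)) * (s/2)) x :=
      (Real.hasDerivAt_cos _).comp x (hu x)
    have hsq := hcos.pow 2
    have hinv := hsq.inv (pow_ne_zero 2 hc)
    have := (hinv.mul_const (s/2)).const_mul (s/α)
    refine this.congr_of_eventuallyEq ?_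
    filter_upwards with y
    simp [hgdef, one_div, mul_comm]
  intro x hxI
  have hxU : x ∈ U := by
    have := hdefined x hxI
    rwa [hm] at this
  have hmemU : U ∈ nhds x := hUopen.mem_nhds hxU
  have heq : deriv h =ᶠ[nhds x] g :=
    Filter.eventually_of_mem hmemU hderivh_eq
  have hdg := hderivg x hxU
  have hdh2 : HasDerivAt (deriv h)
      ((s/α) * (-(2 * Real.cos ((s/2) * (x + b)) ^ 1 *
        (-Real.sin ((s/2) * (x + b)) * (s/2))) /
        (Real.cos ((s/2) * (x + b)) ^ 2) ^ 2 * (s/2))) x :=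
    hdg.congr_of_eventuallyEq heq
  refine ⟨⟨(hderivh x hxU).differentiableAt, hdh2.differentiableAt⟩, ?_⟩
  rw [hdh2.deriv, hderivh_eq x hxU, hdef x]
  have hc : Real.cos ((s/2) * (x + b)) ≠ 0 := hxU
  rw [Real.tan_eq_sin_div_cos]
  simp only [hgdef]
  set cu := Real.cos (s / 2 * (x + b)) with hcu
  set su := Real.sin (s / 2 * (x + b)) with hsu
  field_simp
end

section
/- Fix a real constant b. On the set {x : x ≠ b}, the functions h₁(x) = (x − b)² and h₂(x) = 1/(x − b) each satisfy the third-order ODE −¼·h(x)²·h'''(x) + h(x)·h'(x)·h''(x) − ½·h'(x)³ = 0, and each also satisfies the fourth-order ODE (★) with parameter c = 1: h³(h')²(c−1)² − ½(c−1)²h⁴h'' + (9/4)(c−1)h²h'h'' − (3/4)(c−1)h³h''' − ½(h')²h'' + ½hh'h''' + h(h'')² − ¼h²h'''' = 0. -/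
/-! For `h = (x - b) ^ m` every term of either operator is a constant multiple of one and the
same power of `x - b`; collecting the constants gives
`m (m - 2) (m + 1) / 4 · (x - b) ^ (3m - 3)` for the third-order operator and
`3 m (m - 1) (m - 2) (m + 1) / 4 · (x - b) ^ (3m - 4)` for (★) at `c = 1`.
Both vanish at the exponents `m = 2` and `m = -1`. -/

open Finset

noncomputable section

def thirdOrderOp (h : ℝ → ℝ) (x : ℝ) : ℝ :=
  -(1 / 4) * h x ^ 2 * deriv^[3] h x + h x * deriv h x * deriv^[2] h x - (1 / 2) * deriv h x ^ 3

/-- The left-hand side of (★). -/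
def starOp (c : ℝ) (h : ℝ → ℝ) (x : ℝ) : ℝ :=
  h x ^ 3 * deriv h x ^ 2 * (c - 1) ^ 2
    - (1 / 2) * (c - 1) ^ 2 * h x ^ 4 * deriv^[2] h x
    + (9 / 4) * (c - 1) * h x ^ 2 * deriv h x * deriv^[2] h x
    - (3 / 4) * (c - 1) * h x ^ 3 * deriv^[3] h x
    - (1 / 2) * deriv h x ^ 2 * deriv^[2] h x
    + (1 / 2) * h x * deriv h x * deriv^[3] h x
    + h x * deriv^[2] h x ^ 2
    - (1 / 4) * h x ^ 2 * deriv^[4] h x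

end

theorem zpow_sub_natCast {G₀ : Type*} [GroupWithZero G₀] {a : G₀} (ha : a ≠ 0) (m : ℤ) (k : ℕ) :
    a ^ (m - k) = a ^ m / a ^ k := by
  rw [zpow_sub₀ ha, zpow_natCast]

section ShiftedZPow

variable {𝕜 : Type*} [NontriviallyNormedField 𝕜]

theorem iter_deriv_sub_const_zpow (m : ℤ) (b x : 𝕜) (k : ℕ) :
    deriv^[k] (fun y => (y - b) ^ m) x = (∏ i ∈ range k, ((m : 𝕜) - i)) * (x - b) ^ (m - k) := by
  rw [← iteratedDeriv_eq_iterate, iteratedDeriv_comp_sub_const k (fun y : 𝕜 => y ^ m),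
    iteratedDeriv_eq_iterate]
  exact iter_deriv_zpow m (x - b) k

theorem deriv_sub_const_zpow (m : ℤ) (b x : 𝕜) :
    deriv (fun y => (y - b) ^ m) x = m * (x - b) ^ (m - 1) := by
  simpa using iter_deriv_sub_const_zpow m b x 1

end ShiftedZPow

theorem thirdOrderOp_sub_const_zpow (m : ℤ) {b x : ℝ} (hx : x ≠ b) :
    thirdOrderOp (fun y => (y - b) ^ m) x
      = m * (m - 2) * (m + 1) / 4 * (x - b) ^ (3 * m - 3) := by
  have ht : x - b ≠ 0 := sub_ne_zero.mpr hx
  have hexp : (3 * m - 3 : ℤ) = m * (3 : ℕ) - (3 : ℕ) := by push_cast; ring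
  simp only [thirdOrderOp, deriv_sub_const_zpow, iter_deriv_sub_const_zpow, prod_range_succ,
    prod_range_zero]
  rw [hexp]
  simp only [zpow_sub_natCast ht, show (m - 1 : ℤ) = m - (1 : ℕ) by norm_num, zpow_mul,
    zpow_natCast]
  field_simp
  ring

theorem starOp_one_sub_const_zpow (m : ℤ) {b x : ℝ} (hx : x ≠ b) :
    starOp 1 (fun y => (y - b) ^ m) x
      = 3 * m * (m - 1) * (m - 2) * (m + 1) / 4 * (x - b) ^ (3 * m - 4) := by
  have ht : x - b ≠ 0 := sub_ne_zero.mpr hx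
  have hexp : (3 * m - 4 : ℤ) = m * (3 : ℕ) - (4 : ℕ) := by push_cast; ring
  simp only [starOp, deriv_sub_const_zpow, iter_deriv_sub_const_zpow, prod_range_succ,
    prod_range_zero]
  rw [hexp]
  simp only [zpow_sub_natCast ht, show (m - 1 : ℤ) = m - (1 : ℕ) by norm_num, zpow_mul,
    zpow_natCast]
  field_simp
  ring

/-- On `{x ≠ b}`, the functions `h₁(x) = (x−b)²` and `h₂(x) = 1/(x−b)`
satisfy the third-order ODE `−¼ h² h''' + h h' h'' − ½ (h')³ = 0` and the
fourth-order ODE (★) with parameter `c = 1`. -/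
theorem further_solutions_c_one
    (b : ℝ) (h₁ h₂ : ℝ → ℝ)
    (hdef₁ : ∀ x, h₁ x = (x - b) ^ 2)
    (hdef₂ : ∀ x, h₂ x = 1 / (x - b))
    (c : ℝ) (hc : c = 1) :
    ∀ x, x ≠ b →
      (-(1 / 4) * (h₁ x) ^ 2 * deriv (deriv (deriv h₁)) x
          + h₁ x * deriv h₁ x * deriv (deriv h₁) x
          - (1 / 2) * (deriv h₁ x) ^ 3 = 0) ∧
      (-(1 / 4) * (h₂ x) ^ 2 * deriv (deriv (deriv h₂)) x
          + h₂ x * deriv h₂ x * deriv (deriv h₂) x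
          - (1 / 2) * (deriv h₂ x) ^ 3 = 0) ∧
      ((h₁ x) ^ 3 * (deriv h₁ x) ^ 2 * (c - 1) ^ 2
          - (1 / 2) * (c - 1) ^ 2 * (h₁ x) ^ 4 * deriv (deriv h₁) x
          + (9 / 4) * (c - 1) * (h₁ x) ^ 2 * deriv h₁ x * deriv (deriv h₁) x
          - (3 / 4) * (c - 1) * (h₁ x) ^ 3 * deriv (deriv (deriv h₁)) x
          - (1 / 2) * (deriv h₁ x) ^ 2 * deriv (deriv h₁) x
          + (1 / 2) * h₁ x * deriv h₁ x * deriv (deriv (deriv h₁)) x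
          + h₁ x * (deriv (deriv h₁) x) ^ 2
          - (1 / 4) * (h₁ x) ^ 2 * deriv (deriv (deriv (deriv h₁))) x = 0) ∧
      ((h₂ x) ^ 3 * (deriv h₂ x) ^ 2 * (c - 1) ^ 2
          - (1 / 2) * (c - 1) ^ 2 * (h₂ x) ^ 4 * deriv (deriv h₂) x
          + (9 / 4) * (c - 1) * (h₂ x) ^ 2 * deriv h₂ x * deriv (deriv h₂) x
          - (3 / 4) * (c - 1) * (h₂ x) ^ 3 * deriv (deriv (deriv h₂)) x
          - (1 / 2) * (deriv h₂ x) ^ 2 * deriv (deriv h₂) x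
          + (1 / 2) * h₂ x * deriv h₂ x * deriv (deriv (deriv h₂)) x
          + h₂ x * (deriv (deriv h₂) x) ^ 2
          - (1 / 4) * (h₂ x) ^ 2 * deriv (deriv (deriv (deriv h₂))) x = 0) := by
  subst hc
  obtain rfl : h₁ = fun y => (y - b) ^ (2 : ℤ) := funext fun y => by rw [hdef₁, zpow_ofNat]
  -- `1 / 0 = 0 = 0 ^ (-1)`, so this identity holds at `y = b` too
  obtain rfl : h₂ = fun y => (y - b) ^ (-1 : ℤ) :=
    funext fun y => by rw [hdef₂, zpow_neg_one, one_div]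
  intro x hx
  refine ⟨?_, ?_, ?_, ?_⟩
  · exact (thirdOrderOp_sub_const_zpow 2 hx).trans (by norm_num)
  · exact (thirdOrderOp_sub_const_zpow (-1) hx).trans (by norm_num)
  · exact (starOp_one_sub_const_zpow 2 hx).trans (by norm_num)
  · exact (starOp_one_sub_const_zpow (-1) hx).trans (by norm_num)
end

section
/- Fix real constants a, b, e, j, k, l with b ≠ 0, and define H : ℝ³ → ℝ by H(x, ν, r) = j·tanh(w)³ + k·tanh(w) + l, where w = (a²/b)·r + b·ν + a·x + e. Then H satisfies the hyperCR (dispersionless Hirota) equation: for all (x, ν, r), ∂x H·∂r∂r H − ∂r H·∂x∂r H − ∂x∂x H + ∂r∂ν H = 0. -/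
/-!
`H` is a travelling wave `f(w)` in the linear phase `w = α r + β ν + γ x + e`, with
`(α, β, γ) = (a²/b, b, a)`. Each partial derivative of a travelling wave is again one, with profile
`f'` scaled by the coefficient of that variable. So the hyperCR expression becomes
`γα² f' f'' − αγα f' f'' − γ² f'' + αβ f'' = (αβ − γ²) f''`, which vanishes by the dispersion
relation `αβ = γ²`; the tanh profile plays no role. Since `deriv (fun t => f (c * t + d))` equals
`c * deriv f (c * t + d)` for every `f` (both sides are `0` where `f` is not differentiable), no
regularity of the profile is needed.
-/

lemma deriv_comp_mul_add (f : ℝ → ℝ) (c d s : ℝ) :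
    deriv (fun t => f (c * t + d)) s = c * deriv f (c * s + d) :=
  deriv_comp_mul_left c (fun y => f (y + d)) s ▸ by simp only [deriv_comp_add_const, smul_eq_mul]

noncomputable def hyperCR (H : ℝ → ℝ → ℝ → ℝ) (x ν r : ℝ) : ℝ :=
  deriv (fun x' : ℝ => H x' ν r) x
      * deriv (deriv (fun r' : ℝ => H x ν r')) r
    - deriv (fun r' : ℝ => H x ν r') r
        * deriv (fun x' : ℝ => deriv (fun r' : ℝ => H x' ν r') r) x
    - deriv (deriv (fun x' : ℝ => H x' ν r)) x
    + deriv (fun r' : ℝ => deriv (fun ν' : ℝ => H x ν' r') ν) r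

def travelingWave (f : ℝ → ℝ) (α β γ e : ℝ) (x ν r : ℝ) : ℝ :=
  f (α * r + β * ν + γ * x + e)

section
variable (f : ℝ → ℝ) (α β γ e : ℝ)

lemma deriv_travelingWave_x (ν r : ℝ) :
    deriv (fun x => travelingWave f α β γ e x ν r)
      = fun x => travelingWave (fun w => γ * deriv f w) α β γ e x ν r := by
  funext x
  have hw : (fun x => travelingWave f α β γ e x ν r)
      = fun x => f (γ * x + (α * r + β * ν + e)) := by
    funext x; simp only [travelingWave]; ring_nf
  rw [hw, deriv_comp_mul_add]; simp only [travelingWave]; ring_nf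

lemma deriv_travelingWave_ν (x r : ℝ) :
    deriv (fun ν => travelingWave f α β γ e x ν r)
      = fun ν => travelingWave (fun w => β * deriv f w) α β γ e x ν r := by
  funext ν
  have hw : (fun ν => travelingWave f α β γ e x ν r)
      = fun ν => f (β * ν + (α * r + γ * x + e)) := by
    funext ν; simp only [travelingWave]; ring_nf
  rw [hw, deriv_comp_mul_add]; simp only [travelingWave]; ring_nf

lemma deriv_travelingWave_r (x ν : ℝ) :
    deriv (fun r => travelingWave f α β γ e x ν r)
      = fun r => travelingWave (fun w => α * deriv f w) α β γ e x ν r := by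
  funext r
  have hw : (fun r => travelingWave f α β γ e x ν r)
      = fun r => f (α * r + (β * ν + γ * x + e)) := by
    funext r; simp only [travelingWave]; ring_nf
  rw [hw, deriv_comp_mul_add]; simp only [travelingWave]; ring_nf

theorem hyperCR_travelingWave (hαβ : α * β = γ ^ 2) (x ν r : ℝ) :
    hyperCR (travelingWave f α β γ e) x ν r = 0 := by
  simp only [hyperCR, deriv_travelingWave_x, deriv_travelingWave_ν, deriv_travelingWave_r]
  simp only [deriv_const_mul_field', travelingWave]
  linear_combination deriv (deriv f) (α * r + β * ν + γ * x + e) * hαβ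

end

/-- The 6-parameter family
`H(x,ν,r) = j tanh³(w) + k tanh(w) + l` with `w = (a²/b) r + b ν + a x + e`
satisfies the hyperCR (dispersionless Hirota) equation
`H_x H_rr − H_r H_xr − H_xx + H_rν = 0`. -/
theorem tanh_family_solves_hyperCR
    (a b e j k l : ℝ) (hb : b ≠ 0)
    (H : ℝ → ℝ → ℝ → ℝ)
    (hdef : ∀ x ν r, H x ν r =
      j * Real.tanh (a ^ 2 / b * r + b * ν + a * x + e) ^ 3
        + k * Real.tanh (a ^ 2 / b * r + b * ν + a * x + e) + l) :
    ∀ x ν r,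
      deriv (fun x' : ℝ => H x' ν r) x
          * deriv (deriv (fun r' : ℝ => H x ν r')) r
        - deriv (fun r' : ℝ => H x ν r') r
            * deriv (fun x' : ℝ => deriv (fun r' : ℝ => H x' ν r') r) x
        - deriv (deriv (fun x' : ℝ => H x' ν r)) x
        + deriv (fun r' : ℝ => deriv (fun ν' : ℝ => H x ν' r') ν) r = 0 := by
  have hH : H = travelingWave (fun w => j * Real.tanh w ^ 3 + k * Real.tanh w + l)
      (a ^ 2 / b) b a e :=
    funext₃ hdef
  subst hH
  exact hyperCR_travelingWave _ _ _ _ _ (div_mul_cancel₀ _ hb)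
end
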